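/- arXiv:2601.14419 — 6 statements merged into one kernel-verified Lean document; each statement's English description precedes it below -/
import Mathlib

section
/- For every x ∈ M₀ with q₀(x) invertible in K, the identity (1 + ι(x)ι(e₋))·(1 + q₀(x)⁻¹·ι(x)ι(e₊))·(1 + ι(x)ι(e₋)) = ι(x)ι(e₋) + q₀(x)⁻¹·ι(x)ι(e₊) holds in the Clifford algebra Cl(M,q). -/
open CliffordAlgebra

/-- The quadratic form `q(a, m, b) = a*b + q₀(m)` on `M = K ⊕ M₀ ⊕ K`. -/
noncomputable def Qbig {K : Type*} [CommRing K] {M₀ : Type*} [AddCommGroup M₀] [Module K M₀]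
    (q₀ : QuadraticForm K M₀) : QuadraticForm K (K × M₀ × K) :=
  QuadraticMap.linMulLin (LinearMap.fst K K (M₀ × K))
      ((LinearMap.snd K M₀ K).comp (LinearMap.snd K K (M₀ × K))) +
    q₀.comp ((LinearMap.fst K M₀ K).comp (LinearMap.snd K K (M₀ × K)))

theorem Qbig_apply {K : Type*} [CommRing K] {M₀ : Type*} [AddCommGroup M₀] [Module K M₀]
    (q₀ : QuadraticForm K M₀) (v : K × M₀ × K) :
    Qbig q₀ v = v.1 * v.2.2 + q₀ v.2.1 := by
  simp only [Qbig, QuadraticMap.add_apply, QuadraticMap.comp_apply]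
  rfl

theorem stmt4 (K : Type*) [CommRing K] (M₀ : Type*) [AddCommGroup M₀] [Module K M₀]
    (q₀ : QuadraticForm K M₀) (x : M₀) (hx : IsUnit (q₀ x)) :
    (1 + ι (Qbig q₀) ((0 : K), x, (0 : K)) * ι (Qbig q₀) ((1 : K), (0 : M₀), (0 : K))) *
        (1 + Ring.inverse (q₀ x) •
          (ι (Qbig q₀) ((0 : K), x, (0 : K)) * ι (Qbig q₀) ((0 : K), (0 : M₀), (1 : K)))) *
        (1 + ι (Qbig q₀) ((0 : K), x, (0 : K)) * ι (Qbig q₀) ((1 : K), (0 : M₀), (0 : K))) =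
      ι (Qbig q₀) ((0 : K), x, (0 : K)) * ι (Qbig q₀) ((1 : K), (0 : M₀), (0 : K)) +
        Ring.inverse (q₀ x) •
          (ι (Qbig q₀) ((0 : K), x, (0 : K)) * ι (Qbig q₀) ((0 : K), (0 : M₀), (1 : K))) := by
  set Q := Qbig q₀
  set a := ι Q ((0 : K), x, (0 : K)) with ha_def
  set e := ι Q ((1 : K), (0 : M₀), (0 : K)) with he_def
  set f := ι Q ((0 : K), (0 : M₀), (1 : K)) with hf_def
  have ha : a * a = algebraMap K _ (q₀ x) := by
    rw [ha_def, ι_sq_scalar]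
    congr 1
    simp [Q, Qbig_apply]
  have he : e * e = 0 := by
    rw [he_def, ι_sq_scalar]
    simp [Q, Qbig_apply]
  have hf : f * f = 0 := by
    rw [hf_def, ι_sq_scalar]
    simp [Q, Qbig_apply]
  have hae : e * a = -(a * e) := by
    rw [ha_def, he_def]
    apply CliffordAlgebra.ι_mul_ι_comm_of_isOrtho
    simp [QuadraticMap.IsOrtho, Q, Qbig_apply]
  have haf : f * a = -(a * f) := by
    rw [ha_def, hf_def]
    apply CliffordAlgebra.ι_mul_ι_comm_of_isOrtho
    simp [QuadraticMap.IsOrtho, Q, Qbig_apply]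
  have hef : e * f + f * e = 1 := by
    rw [he_def, hf_def, ι_mul_ι_add_swap]
    have : QuadraticMap.polar Q ((1 : K), (0 : M₀), (0 : K)) ((0 : K), (0 : M₀), (1 : K)) = 1 := by
      simp [QuadraticMap.polar, Q, Qbig_apply]
    rw [this, map_one]
  set u := Ring.inverse (q₀ x) with hu_def
  have huq : u • (algebraMap K (CliffordAlgebra Q) (q₀ x)) = 1 := by
    rw [Algebra.smul_def, ← map_mul, Ring.inverse_mul_cancel _ hx, map_one]
  have hAB : a * e * (a * f) = - (algebraMap K _ (q₀ x)) * (e * f) := by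
    calc a * e * (a * f) = a * (e * a) * f := by noncomm_ring
    _ = a * (-(a*e)) * f := by rw [hae]
    _ = -(a * a) * (e * f) := by noncomm_ring
    _ = - (algebraMap K _ (q₀ x)) * (e * f) := by rw [ha]
  have hBA : a * f * (a * e) = - (algebraMap K _ (q₀ x)) * (f * e) := by
    calc a * f * (a * e) = a * (f * a) * e := by noncomm_ring
    _ = a * (-(a*f)) * e := by rw [haf]
    _ = -(a * a) * (f * e) := by noncomm_ring
    _ = - (algebraMap K _ (q₀ x)) * (f * e) := by rw [ha]
  have hAA : a * e * (a * e) = 0 := by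
    calc a * e * (a * e) = a * (e * a) * e := by noncomm_ring
    _ = a * (-(a*e)) * e := by rw [hae]
    _ = -(a*a) * (e*e) := by noncomm_ring
    _ = 0 := by rw [he, mul_zero]
  have hEFE : e * f * e = e := by
    have : f * e = 1 - e * f := eq_sub_of_add_eq (by rw [add_comm]; exact hef)
    calc e * f * e = e * (f * e) := by noncomm_ring
    _ = e * (1 - e * f) := by rw [this]
    _ = e - e * e * f := by noncomm_ring
    _ = e := by rw [he]; noncomm_ring
  have hABA : a * e * (a * f) * (a * e) = - (algebraMap K _ (q₀ x)) * (a * e) := by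
    calc a * e * (a * f) * (a * e) = (a * e * (a * f)) * a * e := by noncomm_ring
    _ = (- (algebraMap K _ (q₀ x)) * (e * f)) * a * e := by rw [hAB]
    _ = - (algebraMap K _ (q₀ x)) * (e * (f * a) * e) := by noncomm_ring
    _ = - (algebraMap K _ (q₀ x)) * (e * (-(a * f)) * e) := by rw [haf]
    _ = (algebraMap K _ (q₀ x)) * ((e * a) * f * e) := by noncomm_ring
    _ = (algebraMap K _ (q₀ x)) * ((-(a * e)) * f * e) := by rw [hae]
    _ = - (algebraMap K _ (q₀ x)) * (a * (e * f * e)) := by noncomm_ring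
    _ = - (algebraMap K _ (q₀ x)) * (a * e) := by rw [hEFE]
  -- expand
  have expand : (1 + a * e) * (1 + u • (a * f)) * (1 + a * e) =
      1 + 2 • (a * e) + u • (a * f) + a*e*(a*e)
        + u • (a*e*(a*f) + a*f*(a*e)) + u • (a*e*(a*f)*(a*e)) := by
    simp only [mul_add, add_mul, mul_smul_comm, smul_mul_assoc, mul_one, one_mul, smul_add]
    abel
  rw [expand, hAA, hABA, hAB, hBA]
  have hsum : (e * f + f * e) = 1 := hef
  have h1 : u • (-(algebraMap K (CliffordAlgebra Q)) (q₀ x) * (e * f) +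
      -(algebraMap K (CliffordAlgebra Q)) (q₀ x) * (f * e)) = -1 := by
    have : (-(algebraMap K (CliffordAlgebra Q)) (q₀ x) * (e * f) +
        -(algebraMap K (CliffordAlgebra Q)) (q₀ x) * (f * e))
        = -(algebraMap K (CliffordAlgebra Q)) (q₀ x) * (e * f + f * e) := by noncomm_ring
    rw [this, hef, mul_one, smul_neg, huq]
  have h2 : u • (-(algebraMap K (CliffordAlgebra Q)) (q₀ x) * (a * e)) = -(a * e) := by
    rw [neg_mul, smul_neg, ← smul_mul_assoc, huq, one_mul]
  rw [h1, h2]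
  abel
end

section
/- For every x ∈ M₀ with q₀(x) invertible in K, the element w = ι(x)ι(e₋) + q₀(x)⁻¹·ι(x)ι(e₊) of the Clifford algebra Cl(M,q) satisfies w² = −1; in particular w is a unit with w⁻¹ = −w. -/
open CliffordAlgebra

theorem stmt5 (K : Type*) [CommRing K] (M₀ : Type*) [AddCommGroup M₀] [Module K M₀]
    (q₀ : QuadraticForm K M₀) (x : M₀) (hx : IsUnit (q₀ x))
    (w : CliffordAlgebra (Qbig q₀))
    (hw : w = ι (Qbig q₀) ((0 : K), x, (0 : K)) * ι (Qbig q₀) ((1 : K), (0 : M₀), (0 : K)) +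
      Ring.inverse (q₀ x) •
        (ι (Qbig q₀) ((0 : K), x, (0 : K)) * ι (Qbig q₀) ((0 : K), (0 : M₀), (1 : K)))) :
    w ^ 2 = -1 ∧ IsUnit w ∧ Ring.inverse w = -w := by
  set a := ι (Qbig q₀) ((0 : K), x, (0 : K)) with ha'
  set em := ι (Qbig q₀) ((1 : K), (0 : M₀), (0 : K)) with hem'
  set ep := ι (Qbig q₀) ((0 : K), (0 : M₀), (1 : K)) with hep'
  set c := q₀ x with hc
  set u := Ring.inverse c with hu'
  have ha : a * a = algebraMap K _ c := by
    rw [ha', ι_sq_scalar]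
    congr 1
    simp [Qbig, hc]
  have hem : em * em = 0 := by
    rw [hem', ι_sq_scalar]
    have : Qbig q₀ ((1 : K), (0 : M₀), (0 : K)) = 0 := by simp [Qbig]
    rw [this, map_zero]
  have hep : ep * ep = 0 := by
    rw [hep', ι_sq_scalar]
    have : Qbig q₀ ((0 : K), (0 : M₀), (1 : K)) = 0 := by simp [Qbig]
    rw [this, map_zero]
  have hame : em * a = -(a * em) := by
    have h := ι_mul_ι_add_swap (Q := Qbig q₀) ((0 : K), x, (0 : K)) ((1 : K), (0 : M₀), (0 : K))
    have hp : QuadraticMap.polar (Qbig q₀) ((0 : K), x, (0 : K)) ((1 : K), (0 : M₀), (0 : K)) = 0 := by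
      simp [QuadraticMap.polar, Qbig, Prod.add_def]
    rw [hp, map_zero] at h
    rw [← ha', ← hem'] at h
    exact eq_neg_of_add_eq_zero_right h
  have hape : ep * a = -(a * ep) := by
    have h := ι_mul_ι_add_swap (Q := Qbig q₀) ((0 : K), x, (0 : K)) ((0 : K), (0 : M₀), (1 : K))
    have hp : QuadraticMap.polar (Qbig q₀) ((0 : K), x, (0 : K)) ((0 : K), (0 : M₀), (1 : K)) = 0 := by
      simp [QuadraticMap.polar, Qbig, Prod.add_def]
    rw [hp, map_zero] at h
    rw [← ha', ← hep'] at h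
    exact eq_neg_of_add_eq_zero_right h
  have hmp : em * ep + ep * em = 1 := by
    have h := ι_mul_ι_add_swap (Q := Qbig q₀) ((1 : K), (0 : M₀), (0 : K)) ((0 : K), (0 : M₀), (1 : K))
    have hp : QuadraticMap.polar (Qbig q₀) ((1 : K), (0 : M₀), (0 : K)) ((0 : K), (0 : M₀), (1 : K)) = 1 := by
      simp [QuadraticMap.polar, Qbig, Prod.add_def]
    rw [hp, map_one] at h
    rw [← hem', ← hep'] at h
    exact h
  have key1 : (a * em) * a = -(algebraMap K _ c * em) := by
    calc (a * em) * a = a * (em * a) := by rw [mul_assoc]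
    _ = a * (-(a * em)) := by rw [hame]
    _ = -((a * a) * em) := by rw [mul_neg, mul_assoc]
    _ = -(algebraMap K _ c * em) := by rw [ha]
  have key2 : (a * ep) * a = -(algebraMap K _ c * ep) := by
    calc (a * ep) * a = a * (ep * a) := by rw [mul_assoc]
    _ = a * (-(a * ep)) := by rw [hape]
    _ = -((a * a) * ep) := by rw [mul_neg, mul_assoc]
    _ = -(algebraMap K _ c * ep) := by rw [ha]
  have t11 : (a * em) * (a * em) = 0 := by
    rw [← mul_assoc, key1, neg_mul, mul_assoc, hem, mul_zero, neg_zero]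
  have t22 : (a * ep) * (a * ep) = 0 := by
    rw [← mul_assoc, key2, neg_mul, mul_assoc, hep, mul_zero, neg_zero]
  have t12 : (a * em) * (a * ep) = -(algebraMap K _ c * (em * ep)) := by
    rw [← mul_assoc, key1, neg_mul, mul_assoc]
  have t21 : (a * ep) * (a * em) = -(algebraMap K _ c * (ep * em)) := by
    rw [← mul_assoc, key2, neg_mul, mul_assoc]
  have huc : u • (algebraMap K (CliffordAlgebra (Qbig q₀)) c) = 1 := by
    rw [Algebra.smul_def, ← map_mul, Ring.inverse_mul_cancel _ hx, map_one]
  have hsq : w * w = -1 := by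
    rw [hw]
    rw [mul_add, add_mul, add_mul, smul_mul_assoc, mul_smul_comm, mul_smul_comm,
      smul_mul_assoc, t11, t12, t21, t22, smul_zero, smul_zero]
    rw [zero_add, add_zero]
    rw [← smul_add, ← neg_add, ← mul_add, add_comm (ep * em) (em * ep), hmp, mul_one]
    rw [smul_neg, huc]
  have hsq' : w ^ 2 = -1 := by rw [pow_two, hsq]
  have hmul : w * (-w) = 1 := by rw [mul_neg, hsq, neg_neg]
  have hmul' : (-w) * w = 1 := by rw [neg_mul, hsq, neg_neg]
  have hunit : IsUnit w := ⟨⟨w, -w, hmul, hmul'⟩, rfl⟩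
  refine ⟨hsq', hunit, ?_⟩
  have : Ring.inverse w * (w * (-w)) = Ring.inverse w := by rw [hmul, mul_one]
  rw [← mul_assoc, Ring.inverse_mul_cancel _ hunit, one_mul] at this
  exact this.symm
end

section
/- Let x ∈ M₀ with q₀(x) invertible in K and set w = ι(x)ι(e₋) + q₀(x)⁻¹·ι(x)ι(e₊) in Cl(M,q). Then for every a ∈ M₀: w·(1 + ι(a)ι(e₋)) = (1 + ι(q₀(x)⁻²·B₀(x,a)·x − q₀(x)⁻¹·a)·ι(e₊))·w and w·(1 + ι(a)ι(e₊)) = (1 + ι(B₀(x,a)·x − q₀(x)·a)·ι(e₋))·w. -/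
open CliffordAlgebra

theorem stmt6 (K : Type*) [CommRing K] (M₀ : Type*) [AddCommGroup M₀] [Module K M₀]
    (q₀ : QuadraticForm K M₀) (x : M₀) (hx : IsUnit (q₀ x))
    (w : CliffordAlgebra (Qbig q₀))
    (hw : w = ι (Qbig q₀) ((0 : K), x, (0 : K)) * ι (Qbig q₀) ((1 : K), (0 : M₀), (0 : K)) +
      Ring.inverse (q₀ x) •
        (ι (Qbig q₀) ((0 : K), x, (0 : K)) * ι (Qbig q₀) ((0 : K), (0 : M₀), (1 : K))))
    (a : M₀) :
    w * (1 + ι (Qbig q₀) ((0 : K), a, (0 : K)) * ι (Qbig q₀) ((1 : K), (0 : M₀), (0 : K))) =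
      (1 + ι (Qbig q₀) ((0 : K),
            (Ring.inverse (q₀ x) ^ 2 * (q₀ (x + a) - q₀ x - q₀ a)) • x -
              Ring.inverse (q₀ x) • a, (0 : K)) *
          ι (Qbig q₀) ((0 : K), (0 : M₀), (1 : K))) * w ∧
    w * (1 + ι (Qbig q₀) ((0 : K), a, (0 : K)) * ι (Qbig q₀) ((0 : K), (0 : M₀), (1 : K))) =
      (1 + ι (Qbig q₀) ((0 : K),
            (q₀ (x + a) - q₀ x - q₀ a) • x - q₀ x • a, (0 : K)) *
          ι (Qbig q₀) ((1 : K), (0 : M₀), (0 : K))) * w := by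
  set Q := Qbig q₀ with hQ
  set c := Ring.inverse (q₀ x) with hcdef
  have hc : c * q₀ x = 1 := Ring.inverse_mul_cancel _ hx
  set B := q₀ (x + a) - q₀ x - q₀ a with hBdef
  set X := ι Q ((0 : K), x, (0 : K)) with hXdef
  set A := ι Q ((0 : K), a, (0 : K)) with hAdef
  set E := ι Q ((1 : K), (0 : M₀), (0 : K)) with hEdef
  set F := ι Q ((0 : K), (0 : M₀), (1 : K)) with hFdef
  -- linearity helpers
  have hι0 : ∀ (r : K) (m : M₀), ι Q ((0 : K), r • m, (0 : K)) = r • ι Q ((0 : K), m, (0 : K)) := by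
    intro r m
    have : ((0 : K), r • m, (0 : K)) = r • ((0 : K), m, (0 : K)) := by
      simp [Prod.smul_def]
    rw [this, map_smul]
  have hιsub : ∀ (m n : M₀), ι Q ((0 : K), m - n, (0 : K))
      = ι Q ((0 : K), m, (0 : K)) - ι Q ((0 : K), n, (0 : K)) := by
    intro m n
    have : ((0 : K), m - n, (0 : K)) = ((0 : K), m, (0 : K)) - ((0 : K), n, (0 : K)) := by
      simp [Prod.ext_iff]
    rw [this, map_sub]
  -- squares
  have sq : ∀ (aa : K) (m : M₀) (b : K),
      ι Q (aa, m, b) * ι Q (aa, m, b) = algebraMap K _ (aa * b + q₀ m) := by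
    intro aa m b
    have h : Q (aa, m, b) = aa * b + q₀ m := by simp [hQ, Qbig]
    rw [ι_sq_scalar, h]
  have hE2 : E * E = 0 := by rw [hEdef, sq]; simp
  have hF2 : F * F = 0 := by rw [hFdef, sq]; simp
  have hX2 : X * X = algebraMap K _ (q₀ x) := by rw [hXdef, sq]; simp
  -- anticommutations
  have pol : ∀ (u v : K × M₀ × K),
      ι Q u * ι Q v + ι Q v * ι Q u = algebraMap K _ (Q (u + v) - Q u - Q v) := by
    intro u v
    rw [ι_mul_ι_add_swap]
    rfl
  have hEX : E * X = -(X * E) := by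
    have h := pol ((0 : K), x, (0 : K)) ((1 : K), (0 : M₀), (0 : K))
    rw [← hXdef, ← hEdef] at h
    have h0 : Q (((0:K), x, (0:K)) + ((1:K), (0:M₀), (0:K))) - Q (0, x, 0) - Q (1, 0, 0) = 0 := by
      simp [hQ, Qbig]
    rw [h0, map_zero] at h
    linear_combination (norm := noncomm_ring) h
  have hEA : E * A = -(A * E) := by
    have h := pol ((0 : K), a, (0 : K)) ((1 : K), (0 : M₀), (0 : K))
    rw [← hAdef, ← hEdef] at h
    have h0 : Q (((0:K), a, (0:K)) + ((1:K), (0:M₀), (0:K))) - Q (0, a, 0) - Q (1, 0, 0) = 0 := by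
      simp [hQ, Qbig]
    rw [h0, map_zero] at h
    linear_combination (norm := noncomm_ring) h
  have hFX : F * X = -(X * F) := by
    have h := pol ((0 : K), x, (0 : K)) ((0 : K), (0 : M₀), (1 : K))
    rw [← hXdef, ← hFdef] at h
    have h0 : Q (((0:K), x, (0:K)) + ((0:K), (0:M₀), (1:K))) - Q (0, x, 0) - Q (0, 0, 1) = 0 := by
      simp [hQ, Qbig]
    rw [h0, map_zero] at h
    linear_combination (norm := noncomm_ring) h
  have hFA : F * A = -(A * F) := by
    have h := pol ((0 : K), a, (0 : K)) ((0 : K), (0 : M₀), (1 : K))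
    rw [← hAdef, ← hFdef] at h
    have h0 : Q (((0:K), a, (0:K)) + ((0:K), (0:M₀), (1:K))) - Q (0, a, 0) - Q (0, 0, 1) = 0 := by
      simp [hQ, Qbig]
    rw [h0, map_zero] at h
    linear_combination (norm := noncomm_ring) h
  have hXA : X * A + A * X = algebraMap K _ B := by
    have h := pol ((0 : K), x, (0 : K)) ((0 : K), a, (0 : K))
    rw [← hXdef, ← hAdef] at h
    have h0 : Q (((0:K), x, (0:K)) + ((0:K), a, (0:K))) - Q (0, x, 0) - Q (0, a, 0) = B := by
      simp [hQ, hBdef, Qbig]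
    rw [h0] at h
    exact h
  -- continuation versions
  have hEX' : ∀ z, E * (X * z) = -(X * (E * z)) := fun z => by
    rw [← mul_assoc, hEX, neg_mul, mul_assoc]
  have hEA' : ∀ z, E * (A * z) = -(A * (E * z)) := fun z => by
    rw [← mul_assoc, hEA, neg_mul, mul_assoc]
  have hFX' : ∀ z, F * (X * z) = -(X * (F * z)) := fun z => by
    rw [← mul_assoc, hFX, neg_mul, mul_assoc]
  have hFA' : ∀ z, F * (A * z) = -(A * (F * z)) := fun z => by
    rw [← mul_assoc, hFA, neg_mul, mul_assoc]
  have hE2' : ∀ z, E * (E * z) = 0 := fun z => by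
    rw [← mul_assoc, hE2, zero_mul]
  have hF2' : ∀ z, F * (F * z) = 0 := fun z => by
    rw [← mul_assoc, hF2, zero_mul]
  have hX2' : ∀ z, X * (X * z) = q₀ x • z := fun z => by
    rw [← mul_assoc, hX2, Algebra.smul_def]
  have hAX' : ∀ z, A * (X * z) = B • z - X * (A * z) := fun z => by
    have : A * X = algebraMap K _ B - X * A := by
      linear_combination (norm := noncomm_ring) hXA
    rw [← mul_assoc, this, sub_mul, mul_assoc, Algebra.smul_def]
  -- the conjugating elements on the right-hand sides
  have hY : ι Q ((0 : K), (c ^ 2 * B) • x - c • a, (0 : K)) = (c ^ 2 * B) • X - c • A := by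
    rw [hιsub, hι0, hι0, hXdef, hAdef]
  have hZ : ι Q ((0 : K), B • x - q₀ x • a, (0 : K)) = B • X - (q₀ x) • A := by
    rw [hιsub, hι0, hι0, hXdef, hAdef]
  constructor
  · rw [hw, hY]
    simp only [mul_add, add_mul, sub_mul, mul_sub, mul_one, one_mul, smul_mul_assoc,
      mul_smul_comm, mul_assoc]
    simp only [hEA', hFA', hEX', hFX', hE2', hF2', hX2', hAX', hE2, hF2,
      mul_neg, neg_mul, smul_neg, neg_neg, mul_zero, smul_zero, neg_zero, smul_sub, smul_smul,
      add_zero, zero_add]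
    match_scalars
    all_goals first | ring1 | linear_combination hc | linear_combination (c * (q₀ (x + a) - q₀ x - q₀ a)) * hc
  · rw [hw, hZ]
    simp only [mul_add, add_mul, sub_mul, mul_sub, mul_one, one_mul, smul_mul_assoc,
      mul_smul_comm, mul_assoc]
    simp only [hEA', hFA', hEX', hFX', hE2', hF2', hX2', hAX', hE2, hF2,
      mul_neg, neg_mul, smul_neg, neg_neg, mul_zero, smul_zero, neg_zero, smul_sub, smul_smul,
      add_zero, zero_add]
    match_scalars
    all_goals first | ring1 | linear_combination hc | linear_combination (c * (q₀ (x + a) - q₀ x - q₀ a)) * hc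
end

section
/- Let x, y, z ∈ K with y invertible and xz − y invertible (equivalently xyz − y² ∈ K*). Then t₊(x,y,z) · t₋(z·(y−xz)⁻¹, (xz−y)⁻¹, −x·y⁻¹) · t₊(x·(xz−y)·y⁻¹, y, y·z·(xz−y)⁻¹) equals the matrix w = [[0,0,y],[0,(y−xz)·y⁻¹,0],[(xz−y)⁻¹,0,0]], and w² is the diagonal matrix diag(y·(xz−y)⁻¹, (xz−y)²·y⁻², y·(xz−y)⁻¹). -/
open Matrix

/-- The upper unipotent `t₊(x,y,z)` in `SL(3,K)`. -/
def tP3 {K : Type*} [CommRing K] (x y z : K) : Matrix (Fin 3) (Fin 3) K :=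
  !![1, x, y; 0, 1, z; 0, 0, 1]

/-- The lower unipotent `t₋(x,y,z)` in `SL(3,K)`. -/
def tM3 {K : Type*} [CommRing K] (x y z : K) : Matrix (Fin 3) (Fin 3) K :=
  !![1, 0, 0; x, 1, 0; y, z, 1]

/-- The ultrashort Weyl element in the `²A₂,₁⁽¹⁾`-case: the product of the given unipotents
equals `w = [[0,0,y],[0,(y−xz)y⁻¹,0],[(xz−y)⁻¹,0,0]]`, whose square is the non-central
diagonal matrix `diag(y(xz−y)⁻¹, (xz−y)²y⁻², y(xz−y)⁻¹)`. -/
theorem stmt17 (K : Type*) [CommRing K] (x y z : K)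
    (hy : IsUnit y) (hxz : IsUnit (x * z - y))
    (w : Matrix (Fin 3) (Fin 3) K)
    (hw : w = !![0, 0, y;
                 0, (y - x * z) * Ring.inverse y, 0;
                 Ring.inverse (x * z - y), 0, 0]) :
    tP3 x y z *
        tM3 (z * Ring.inverse (y - x * z)) (Ring.inverse (x * z - y)) (-(x * Ring.inverse y)) *
        tP3 (x * (x * z - y) * Ring.inverse y) y (y * z * Ring.inverse (x * z - y)) = w ∧
      w ^ 2 = !![y * Ring.inverse (x * z - y), 0, 0;
                 0, (x * z - y) ^ 2 * Ring.inverse y ^ 2, 0;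
                 0, 0, y * Ring.inverse (x * z - y)] := by
  have hyz : IsUnit (y - x * z) := by
    have := hxz.neg; rwa [neg_sub] at this
  have h1 : y * Ring.inverse y = 1 := Ring.mul_inverse_cancel _ hy
  have h2 : (x * z - y) * Ring.inverse (x * z - y) = 1 := Ring.mul_inverse_cancel _ hxz
  have h3 : (y - x * z) * Ring.inverse (y - x * z) = 1 := Ring.mul_inverse_cancel _ hyz
  set a := Ring.inverse y
  set b := Ring.inverse (x * z - y)
  set c := Ring.inverse (y - x * z)
  have hc : c = -b := by linear_combination (-c) * h2 + (-b) * h3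
  subst hw
  refine ⟨?_, ?_⟩ <;> ext i j <;>
    fin_cases i <;> fin_cases j <;>
    simp [tP3, tM3, pow_two, mul_apply, Fin.sum_univ_succ, vecHead, vecTail] <;>
    ring_nf
  · linear_combination x * z * hc - h2
  · linear_combination (x ^ 2 * z * a * (x * z - y)) * hc + (-x) * h1 +
      (-(x * a * (x * z - y))) * h2
  · linear_combination x * z * y * hc + (-(x * y * z * b)) * h1 + (-y) * h2
  · linear_combination z * hc
  · linear_combination (z * x * a * (x * z - y)) * hc - h1
  · linear_combination z * y * hc + (-(x * z ^ 2 * b)) * h1 + (-z) * h2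
  · linear_combination (x * a) * h2
  · linear_combination (-(x * z * b)) * h1 - h2
end

section
/- For a ∈ K, the following are equivalent: (i) for every p ∈ K there exists q ∈ K with t₋(a)·t₊(p)·t₋(−a) = t₊(q); (ii) a² = 0 and 2a = 0. -/
open Matrix

/-- The unipotent root element `t₊(x)` of `SO(q)` for `q(x,y,z) = xz + y²`. -/
def tPso {K : Type*} [CommRing K] (x : K) : Matrix (Fin 3) (Fin 3) K :=
  !![1, -(2 * x), -x ^ 2; 0, 1, x; 0, 0, 1]

/-- The unipotent root element `t₋(a)` of `SO(q)` for `q(x,y,z) = xz + y²`. -/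
def tMso {K : Type*} [CommRing K] (a : K) : Matrix (Fin 3) (Fin 3) K :=
  !![1, 0, 0; -a, 1, 0; -a ^ 2, 2 * a, 1]

/-- `t₋(a)` normalizes the positive root subgroup `{t₊(p)}` iff `a² = 0` and `2a = 0`. -/
theorem stmt18 (K : Type*) [CommRing K] (a : K) :
    (∀ p : K, ∃ q : K, tMso a * tPso p * tMso (-a) = tPso q) ↔ (a ^ 2 = 0 ∧ 2 * a = 0) := by
  constructor
  · intro h
    obtain ⟨q, hq⟩ := h 1
    have e00 := congrFun (congrFun hq 0) 0
    have e22 := congrFun (congrFun hq 2) 2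
    have e10 := congrFun (congrFun hq 1) 0
    simp [tMso, tPso, Matrix.mul_apply, Fin.sum_univ_three, Matrix.vecHead,
      Matrix.vecTail] at e00 e22 e10
    have ha2 : a ^ 2 = 0 := by linear_combination (a - 1) * e22 - e00 + e10
    exact ⟨ha2, by linear_combination e22 - ha2⟩
  · rintro ⟨h1, h2⟩ p
    have hA : ∀ x : K, a ^ 2 * x = 0 := fun x => by rw [h1, zero_mul]
    have hB : ∀ x : K, 2 * a * x = 0 := fun x => by rw [h2, zero_mul]
    refine ⟨p + a * p ^ 2, ?_⟩
    ext i j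
    fin_cases i <;> fin_cases j <;>
      simp [tMso, tPso, Matrix.mul_apply, Fin.sum_univ_three, Matrix.vecHead,
        Matrix.vecTail] <;>
      first
        | linear_combination (0 : K)
        | linear_combination hB (-p) + hA (p ^ 2)
        | linear_combination hB (2 * p ^ 2)
        | linear_combination hB (-p ^ 3) + hA (-p ^ 4)
        | linear_combination hA (p - a * p ^ 2)
        | linear_combination hA (-2 * p ^ 2)
        | linear_combination hA (-(a ^ 2 * p ^ 2))
        | linear_combination hA (-2 * p - 2 * a * p ^ 2)
        | linear_combination hB p + hA (p ^ 2)
end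

section
/- Let x ∈ K be invertible and u, v ∈ K with u² = 0, 2u = 0, v² = 0, 2v = 0. Then w := t₊(x+u)·t₋(−x⁻¹)·t₊(x+v) = [[0,0,−x²],[u·x⁻²,−1,v],[−x⁻²,0,0]], and w² = [[1,0,0],[(u+v)·x⁻²,1,u+v],[0,0,1]]; in particular w² = 1 if and only if u + v = 0. -/
open Matrix

/-- The Weyl elements `w = t₊(x+u) t₋(−x⁻¹) t₊(x+v)` in the exceptional rank-1 adjoint case,
their explicit form, their squares, and the criterion `w² = 1 ↔ u + v = 0`. -/
theorem stmt19 (K : Type*) [CommRing K] (x u v : K) (hx : IsUnit x)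
    (hu2 : u ^ 2 = 0) (h2u : 2 * u = 0) (hv2 : v ^ 2 = 0) (h2v : 2 * v = 0)
    (w : Matrix (Fin 3) (Fin 3) K)
    (hw : w = tPso (x + u) * tMso (-Ring.inverse x) * tPso (x + v)) :
    w = !![0, 0, -x ^ 2;
           u * Ring.inverse x ^ 2, -1, v;
           -Ring.inverse x ^ 2, 0, 0] ∧
      w ^ 2 = !![1, 0, 0;
                 (u + v) * Ring.inverse x ^ 2, 1, u + v;
                 0, 0, 1] ∧
      (w ^ 2 = 1 ↔ u + v = 0) := by
  set y := Ring.inverse x with hy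
  have hxy : x * y = 1 := Ring.mul_inverse_cancel x hx
  have hW : w = !![0, 0, -x ^ 2; u * y ^ 2, -1, v; -y ^ 2, 0, 0] := by
    rw [hw, tPso, tMso, tPso, Matrix.mul_fin_three, Matrix.mul_fin_three]
    ext i j
    fin_cases i <;> fin_cases j <;> simp
    · linear_combination (y^2) * hu2 + ((-1) + (2)*y*u + x*y) * hxy
    · linear_combination ((2)*y + (-2)*y^2*v + (-2)*x*y^2) * hu2 + h2u +
        ((2)*v + (4)*u + (-4)*y*u*v + (4)*x + (-2)*x*y*v + (-4)*x*y*u + (-2)*x^2*y) * hxy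
    · linear_combination ((-1) + (2)*y*v + (-1)*y^2*v^2 + (2)*x*y + (-2)*x*y^2*v + (-1)*x^2*y^2) * hu2 +
        v * h2u +
        ((-1) + (2)*y*u + (2)*x*y + (-2)*x*y^2*u + (-1)*x^2*y^2) * hv2 +
        ((4)*u*v + (4)*x*v + (4)*x*u + (-4)*x*y*u*v + (3)*x^2 + (-2)*x^2*y*v + (-2)*x^2*y*u + (-1)*x^3*y) * hxy
    · linear_combination ((-1)*y^2) * h2u + ((-1)*y) * hxy
    · linear_combination (y^2*v) * h2u + ((-2) + (2)*y*v + (2)*y*u + (2)*x*y) * hxy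
    · linear_combination ((-1)*y + y^2*u + x*y^2) * hv2 + (-1 : K) * h2v +
        ((-2)*v + (-1)*u + (2)*y*u*v + (-2)*x + (2)*x*y*v + x*y*u + x^2*y) * hxy
    · linear_combination (y^2) * h2v + ((2)*y) * hxy
    · linear_combination (y^2) * hv2 + ((-1) + (2)*y*v + x*y) * hxy
  have hW2 : w ^ 2 = !![1, 0, 0; (u + v) * y ^ 2, 1, u + v; 0, 0, 1] := by
    rw [pow_two, hW, Matrix.mul_fin_three]
    ext i j
    fin_cases i <;> fin_cases j <;> simp
    · linear_combination (1 + x*y) * hxy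
    · linear_combination ((-1)*y^2) * h2u + ((-1)*y^2) * h2v
    · linear_combination (-1 : K) * h2u + (-1 : K) * h2v + ((-1)*u + (-1)*x*y*u) * hxy
    · linear_combination (1 + x*y) * hxy
  refine ⟨hW, hW2, ?_, ?_⟩
  · intro h
    have h12 := congr_fun (congr_fun (hW2.symm.trans h) 1) 2
    simpa [Matrix.one_apply] using h12
  · intro h
    rw [hW2, h, zero_mul]
    exact Matrix.one_fin_three.symm
end
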